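/- arXiv:2508.12627 — 2 statements merged into one kernel-verified Lean document; each statement's English description precedes it below -/
import Mathlib

section
/- Let X be a nonempty set, m ≤ n positive integers, h : X^m → ℝ, and x ∈ X^n. Then the U-statistic U(h,x) = Σ_{s ∈ [n]^m, all s_i distinct} h(x[s]) satisfies U(h,x) = Σ_{π partition of [m]} μ_π · V[π](h,x), where μ_π = (-1)^{m - |π|} · Π_{C ∈ π} (|C| - 1)!, and V[π](h,x) = Σ_{s ∈ [n]^m constant on blocks of π} h(x[s]). -/
open Classical

/-- The restricted V-statistic `V[π](h,x)`: the sum of `h(x[s])` over index tuples `s`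
constant on each block of the partition `π`. -/
noncomputable def Vstat {X : Type*} (m n : ℕ) (h : (Fin m → X) → ℝ) (x : Fin n → X)
    (π : Setoid (Fin m)) : ℝ :=
  ∑ s ∈ Finset.univ.filter (fun s : Fin m → Fin n => ∀ i j, π.r i j → s i = s j), h (x ∘ s)

/-- The coefficient `μ_π = (-1)^(m - |π|) · Π_{C ∈ π} (|C| - 1)!`. -/
noncomputable def muCoeff (m : ℕ) (π : Setoid (Fin m)) : ℝ :=
  (-1 : ℝ) ^ (m - Nat.card (Quotient π)) *
    ∏ᶠ C ∈ π.classes, (Nat.factorial (Set.ncard C - 1) : ℝ)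

section UstatAux
open Equiv Equiv.Perm Finset


private lemma fix_pow {β : Type*} (g : Equiv.Perm β) {a : β} (h : g a = a) :
    ∀ t : ℕ, (g ^ t) a = a
  | 0 => rfl
  | (t+1) => by rw [pow_succ, Perm.mul_apply, h]; exact fix_pow g h t

private lemma fix_zpow {β : Type*} (g : Equiv.Perm β) {a : β} (h : g a = a) :
    ∀ t : ℤ, (g ^ t) a = a
  | Int.ofNat n => by simpa using fix_pow g h n
  | Int.negSucc n => by
      have h1 : (g ^ (n+1)) a = a := fix_pow g h (n+1)
      rw [zpow_negSucc]
      conv_lhs => rw [← h1]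
      exact Equiv.symm_apply_apply _ _

/-- `permCongr` as a `MulEquiv`. -/
private def permCongrMul {γ δ : Type*} (e : γ ≃ δ) : Equiv.Perm γ ≃* Equiv.Perm δ :=
  { e.permCongr with
    map_mul' := by
      intro p q; ext x
      simp [Equiv.permCongr_apply, Perm.mul_apply] }

private lemma permCongrMul_apply {γ δ : Type*} (e : γ ≃ δ) (p : Equiv.Perm γ) (x : δ) :
    permCongrMul e p x = e (p (e.symm x)) := rfl

open Fin.NatCast in
private lemma sum_sign_fullcycle (n : ℕ) (β : Type*) [Fintype β] [DecidableEq β] (a : β)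
    (hcard : Fintype.card β = n + 1) :
    ∑ c ∈ Finset.univ.filter (fun c : Equiv.Perm β => ∀ u v : β, c.SameCycle u v),
        ((Equiv.Perm.sign c : ℤ) : ℝ)
      = (-1 : ℝ) ^ n * (Nat.factorial n : ℝ) := by
  set r := finRotate (n+1) with hr_def
  -- powers of finRotate
  have hrpow : ∀ (k : ℕ) (i : Fin (n+1)), (r ^ k) i = i + (k : Fin (n+1)) := by
    intro k
    induction k with
    | zero => intro i; simp
    | succ k ih =>
      intro i
      rw [pow_succ, Perm.mul_apply, hr_def, finRotate_succ_apply, ih]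
      push_cast
      abel
  set E : (Fin (n+1) ≃ β) → Equiv.Perm β := fun e => (permCongrMul e) r with hE_def
  have hEpow : ∀ (e : Fin (n+1) ≃ β) (k : ℕ), (E e) ^ k = (permCongrMul e) (r ^ k) := by
    intro e k; rw [hE_def, ← map_pow]
  have horb : ∀ (e : Fin (n+1) ≃ β) (k : ℕ) (u : β),
      ((E e) ^ k) u = e (e.symm u + (k : Fin (n+1))) := by
    intro e k u
    rw [hEpow, permCongrMul_apply, hrpow]
  -- the source finset
  set S : Finset (Fin (n+1) ≃ β) := Finset.univ.filter (fun e => e 0 = a) with hS_def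
  -- distinctness of the orbit of a full cycle
  have hper : ∀ c : Equiv.Perm β, (∀ u v : β, c.SameCycle u v) →
      ∀ d : ℕ, 0 < d → d < n + 1 → (c ^ d) a ≠ a := by
    intro c hfull d hd0 hdn hfix
    have hsurj : Function.Surjective (fun i : Fin d => (c ^ (i : ℕ)) a) := by
      intro y
      obtain ⟨z, hz⟩ := hfull a y
      have hd0' : (0 : ℤ) < (d : ℤ) := by exact_mod_cast hd0
      refine ⟨⟨(z % d).toNat, ?_⟩, ?_⟩
      · have h1 : z % d < d := Int.emod_lt_of_pos z hd0'
        omega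
      · have h0 : (0 : ℤ) ≤ z % d := Int.emod_nonneg z (by omega)
        have hcast : (((z % d).toNat : ℤ)) = z % d := Int.toNat_of_nonneg h0
        have hfixz : (c ^ ((d : ℤ) * (z / d))) a = a := by
          rw [zpow_mul]
          exact fix_zpow _ (by simpa using hfix) _
        have : (c ^ (z % d)) a = y := by
          have hsplit : (c ^ (z % d)) ((c ^ ((d : ℤ) * (z / d))) a) = (c ^ z) a := by
            rw [← Perm.mul_apply, ← zpow_add, Int.emod_add_mul_ediv z d]
          rw [hfixz] at hsplit
          rw [hsplit, hz]
        show (c ^ (((z % (d:ℤ)).toNat))) a = y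
        rw [← zpow_natCast c, hcast]
        exact this
    have hle : n + 1 ≤ d := by
      have := Fintype.card_le_of_surjective _ hsurj
      simpa [hcard] using this
    omega
  -- the map E sends S bijectively onto the full cycles
  rw [show (Finset.univ.filter (fun c : Equiv.Perm β => ∀ u v : β, c.SameCycle u v)) =
      (Finset.univ.filter (fun c : Equiv.Perm β => ∀ u v : β, c.SameCycle u v)) from rfl]
  rw [← Finset.sum_bij (s := S)
    (t := Finset.univ.filter (fun c : Equiv.Perm β => ∀ u v : β, c.SameCycle u v))
    (i := fun e _ => E e)
    (hi := ?_) (i_inj := ?_) (i_surj := ?_)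
    (g := fun c => ((Equiv.Perm.sign c : ℤ) : ℝ))
    (f := fun e => ((Equiv.Perm.sign (E e) : ℤ) : ℝ)) (h := fun e _ => rfl)]
  · -- compute the sum over S
    have hsgn : ∀ e : Fin (n+1) ≃ β, ((Equiv.Perm.sign (E e) : ℤ) : ℝ) = (-1 : ℝ) ^ n := by
      intro e
      have h1 : Equiv.Perm.sign (E e) = Equiv.Perm.sign r := by
        rw [hE_def]
        exact Equiv.Perm.sign_permCongr e r
      rw [h1, hr_def, sign_finRotate]
      push_cast
      ring
    rw [Finset.sum_congr rfl (fun e _ => hsgn e), Finset.sum_const, nsmul_eq_mul]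
    -- card S = n!
    have hcardS : S.card * (n + 1) = Nat.factorial (n+1) := by
      have h1 : (Finset.univ : Finset (Fin (n+1) ≃ β)).card
          = ∑ b : β, (Finset.univ.filter (fun e : Fin (n+1) ≃ β => e 0 = b)).card :=
        Finset.card_eq_sum_card_fiberwise (fun e _ => Finset.mem_univ _)
      have h2 : ∀ b : β, (Finset.univ.filter (fun e : Fin (n+1) ≃ β => e 0 = b)).card = S.card := by
        intro b
        refine Finset.card_nbij' (i := fun e => e.trans (Equiv.swap b a))
          (j := fun e => e.trans (Equiv.swap b a)) ?_ ?_ ?_ ?_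
        · intro e he
          simp only [Finset.mem_coe, Finset.mem_filter, Finset.mem_univ, true_and] at he ⊢
          rw [hS_def]
          simp [he, Equiv.swap_apply_left]
        · intro e he
          rw [hS_def] at he
          simp only [Finset.mem_coe, Finset.mem_filter, Finset.mem_univ, true_and] at he ⊢
          simp [he, Equiv.swap_apply_right]
        · intro e _
          ext x
          simp [Equiv.swap_apply_self]
        · intro e _
          ext x
          simp [Equiv.swap_apply_self]
      rw [Finset.sum_congr rfl (fun b _ => h2 b), Finset.sum_const, smul_eq_mul] at h1
      have h3 : (Finset.univ : Finset (Fin (n+1) ≃ β)).card = Nat.factorial (n+1) := by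
        rw [← Fintype.card, Fintype.card_equiv (Equiv.refl _ |>.trans ?_)]
        · simp
        · exact (Fintype.equivFinOfCardEq hcard).symm
      rw [h3, Finset.card_univ, hcard] at h1
      rw [mul_comm]
      exact h1.symm
    have hfact : Nat.factorial (n+1) = (n+1) * Nat.factorial n := rfl
    have hcS : S.card = Nat.factorial n := by
      rw [hfact] at hcardS
      exact Nat.eq_of_mul_eq_mul_left (Nat.succ_pos n)
        (by rw [mul_comm]; exact hcardS)
    rw [hcS]
    ring
  · -- maps to full cycles
    intro e _
    simp only [Finset.mem_filter, Finset.mem_univ, true_and]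
    intro u v
    refine ⟨(((e.symm v - e.symm u : Fin (n+1))).val : ℤ), ?_⟩
    rw [zpow_natCast, horb]
    rw [Fin.cast_val_eq_self]
    congr 1
    abel_nf
    simp [sub_add_cancel]
  · -- injectivity
    intro e he e' he' hEe
    rw [hS_def] at he he'
    simp only [Finset.mem_filter, Finset.mem_univ, true_and] at he he'
    ext i
    have h1 : ((E e) ^ (i.val)) a = e i := by
      conv_lhs => rw [← he]
      rw [horb, Equiv.symm_apply_apply, zero_add, Fin.cast_val_eq_self]
    have h2 : ((E e') ^ (i.val)) a = e' i := by
      conv_lhs => rw [← he']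
      rw [horb, Equiv.symm_apply_apply, zero_add, Fin.cast_val_eq_self]
    rw [← h1, ← h2, hEe]
  · -- surjectivity
    intro c hc
    simp only [Finset.mem_filter, Finset.mem_univ, true_and] at hc
    -- build the enumeration
    have hinj : Function.Injective (fun i : Fin (n+1) => (c ^ (i.val)) a) := by
      have key : ∀ i j : Fin (n+1), i.val ≤ j.val → (c ^ (i.val)) a = (c ^ (j.val)) a → i = j := by
        intro i j hij hEq
        have hd : (c ^ (j.val - i.val)) a = a := by
          have : (c ^ (i.val)) ((c ^ (j.val - i.val)) a) = (c ^ (i.val)) a := by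
            rw [← Perm.mul_apply, ← pow_add]
            rw [show i.val + (j.val - i.val) = j.val by omega]
            exact hEq.symm
          exact (c ^ (i.val)).injective this
        by_cases h0 : j.val - i.val = 0
        · exact Fin.ext (by omega)
        · exact absurd hd (hper c hc _ (by omega) (by omega))
      intro i j hEq
      rcases le_total i.val j.val with h | h
      · exact key i j h hEq
      · exact (key j i h hEq.symm).symm
    have hbij : Function.Bijective (fun i : Fin (n+1) => (c ^ (i.val)) a) := by
      rw [Fintype.bijective_iff_injective_and_card]
      exact ⟨hinj, by simp [hcard]⟩
    set e : Fin (n+1) ≃ β := Equiv.ofBijective _ hbij with he_def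
    have he_app : ∀ i : Fin (n+1), e i = (c ^ (i.val)) a := fun i => rfl
    have he0 : e 0 = a := by rw [he_app]; simp
    -- c^(n+1) a = a
    have hcycle : (c ^ (n+1)) a = a := by
      obtain ⟨i, hi⟩ := hbij.2 ((c ^ (n+1)) a)
      simp only at hi
      by_cases h0 : i.val = 0
      · rw [h0] at hi; simpa using hi.symm
      · exfalso
        have hd : (c ^ (n + 1 - i.val)) a = a := by
          have : (c ^ (i.val)) ((c ^ (n + 1 - i.val)) a) = (c ^ (i.val)) a := by
            rw [← Perm.mul_apply, ← pow_add]
            rw [show i.val + (n + 1 - i.val) = n + 1 by omega]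
            exact hi.symm
          exact (c ^ (i.val)).injective this
        exact hper c hc _ (by omega) (by omega) hd
    refine ⟨e, ?_, ?_⟩
    · rw [hS_def]; simp [he0]
    · -- E e = c
      ext y
      obtain ⟨i, rfl⟩ := e.surjective y
      have h1 : E e (e i) = e (i + 1) := by
        rw [hE_def, permCongrMul_apply, Equiv.symm_apply_apply, hr_def, finRotate_succ_apply]
      rw [h1, he_app, he_app]
      by_cases hl : i = Fin.last n
      · have : (i + 1) = 0 := by rw [hl]; simp
        rw [this, hl]
        simp only [Fin.val_zero, pow_zero, Perm.one_apply, Fin.val_last]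
        rw [← Perm.mul_apply, ← pow_succ']
        exact hcycle.symm
      · have : (i + 1).val = i.val + 1 := by
          rw [Fin.val_add_one]
          simp [hl]
        rw [this, pow_succ', Perm.mul_apply]

private def sigmaSingleEquiv {ι : Type*} [DecidableEq ι] {κ : ι → Type*} (i : ι) :
    κ i ≃ {x : Σ j, κ j // x.1 = i} where
  toFun y := ⟨⟨i, y⟩, rfl⟩
  invFun x := cast (congrArg κ x.2) x.1.2
  left_inv y := rfl
  right_inv := by rintro ⟨⟨j, y⟩, rfl⟩; rfl

private lemma sigma_single_eq_extendDomain {ι : Type*} [DecidableEq ι] {κ : ι → Type*}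
    (i : ι) (c : Equiv.Perm (κ i)) :
    Equiv.Perm.sigmaCongrRightHom κ (Pi.mulSingle i c)
      = c.extendDomain (sigmaSingleEquiv i) := by
  apply Equiv.ext
  rintro ⟨j, y⟩
  by_cases h : j = i
  · subst h
    rw [Equiv.Perm.extendDomain_apply_subtype _ (sigmaSingleEquiv j)
      (show ((⟨j, y⟩ : Σ j', κ j')).1 = j from rfl)]
    show (⟨j, Pi.mulSingle (M := fun j' => Equiv.Perm (κ j')) j c j y⟩ : Σ j', κ j') = _
    simp [sigmaSingleEquiv]
  · rw [Equiv.Perm.extendDomain_apply_not_subtype _ (sigmaSingleEquiv i) (by simpa using h)]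
    show (⟨j, Pi.mulSingle (M := fun j' => Equiv.Perm (κ j')) i c j y⟩ : Σ j', κ j') = ⟨j, y⟩
    rw [Pi.mulSingle_eq_of_ne h]
    rfl

private lemma sign_sigmaCongrRightHom {ι : Type*} [Fintype ι] [DecidableEq ι]
    {κ : ι → Type*} [∀ i, Fintype (κ i)] [∀ i, DecidableEq (κ i)]
    (F : ∀ i, Equiv.Perm (κ i)) :
    Equiv.Perm.sign (Equiv.Perm.sigmaCongrRightHom κ F) = ∏ i, Equiv.Perm.sign (F i) := by
  conv_lhs => rw [← Finset.noncommProd_mulSingle F]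
  erw [Finset.map_noncommProd, Finset.map_noncommProd]
  rw [Finset.noncommProd_eq_prod]
  refine Finset.prod_congr rfl (fun i _ => ?_)
  rw [sigma_single_eq_extendDomain, Equiv.Perm.sign_extendDomain]

private lemma claimA {α : Type*} [Fintype α] [DecidableEq α] (π : Setoid α) :
    ∑ w ∈ Finset.univ.filter (fun w : Equiv.Perm α => Equiv.Perm.SameCycle.setoid w = π),
        ((Equiv.Perm.sign w : ℤ) : ℝ)
      = (-1 : ℝ) ^ (Fintype.card α - Nat.card (Quotient π)) *
          ∏ᶠ C ∈ π.classes, ((Nat.factorial (Set.ncard C - 1) : ℝ)) := by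
  classical
  set Q := Quotient π with hQ
  let fib : Q → Type _ := fun q => {x // Quotient.mk π x = q}
  let e : (Σ q, fib q) ≃ α := Equiv.sigmaFiberEquiv (Quotient.mk π)
  let Ψ : (∀ q, Equiv.Perm (fib q)) →* Equiv.Perm α :=
    (permCongrMul e).toMonoidHom.comp (Equiv.Perm.sigmaCongrRightHom fib)
  have hΨapp : ∀ (F : ∀ q, Equiv.Perm (fib q)) (x : α),
      Ψ F x = ((F (Quotient.mk π x)) ⟨x, rfl⟩ : fib _).val := fun F x => rfl
  have hmk_of_rel : ∀ {x y : α}, π.r x y → Quotient.mk π x = Quotient.mk π y :=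
    fun h => Quotient.sound h
  have hrel_of_mk : ∀ {x y : α}, Quotient.mk π x = Quotient.mk π y → π.r x y :=
    fun h => Quotient.exact h
  have hset : ∀ w : Equiv.Perm α,
      (Equiv.Perm.SameCycle.setoid w = π) ↔ ∀ x y, (w.SameCycle x y ↔ π.r x y) := by
    intro w
    constructor
    · intro h x y; rw [← h]; exact Iff.rfl
    · intro h; exact Setoid.ext h
  -- the target pi-set
  set B : Finset (∀ q, Equiv.Perm (fib q)) :=
    Fintype.piFinset (fun q => Finset.univ.filter
      (fun c : Equiv.Perm (fib q) => ∀ u v : fib q, c.SameCycle u v)) with hB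
  -- forward map
  set i : Equiv.Perm α → ∀ q, Equiv.Perm (fib q) := fun w q =>
    if h : ∀ x : α, (Quotient.mk π (w x) = q) ↔ (Quotient.mk π x = q)
    then (w.subtypePerm h : Equiv.Perm (fib q)) else 1 with hi_def
  have hrel_apply : ∀ w : Equiv.Perm α, Equiv.Perm.SameCycle.setoid w = π →
      ∀ x : α, Quotient.mk π (w x) = Quotient.mk π x := by
    intro w hw x
    refine (hmk_of_rel ?_).symm
    exact ((hset w).1 hw x (w x)).1 ⟨1, by simp⟩
  have hcond : ∀ w : Equiv.Perm α, (∀ x : α, Quotient.mk π (w x) = Quotient.mk π x) →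
      ∀ q : Q, ∀ x : α, (Quotient.mk π (w x) = q) ↔ (Quotient.mk π x = q) := by
    intro w hw q x
    rw [hw x]
  have hi_eq : ∀ w (hw : ∀ x : α, Quotient.mk π (w x) = Quotient.mk π x) (q : Q),
      i w q = (w.subtypePerm (hcond w hw q) : Equiv.Perm (fib q)) := by
    intro w hw q
    rw [hi_def]
    exact dif_pos (hcond w hw q)
  have hj' : ∀ F : ∀ q, Equiv.Perm (fib q), (∀ q, ∀ u v : fib q, (F q).SameCycle u v) →
      Equiv.Perm.SameCycle.setoid (Ψ F) = π := by
    intro F hF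
    rw [hset]
    intro x y
    constructor
    · rintro ⟨z, hz⟩
      rw [← map_zpow] at hz
      rw [hΨapp] at hz
      refine hrel_of_mk ?_
      have := ((F ^ z) (Quotient.mk π x) ⟨x, rfl⟩).prop
      rw [hz] at this
      exact this.symm
    · intro hrel
      have hq : Quotient.mk π y = Quotient.mk π x := (hmk_of_rel hrel).symm
      obtain ⟨z, hz⟩ := hF (Quotient.mk π x) ⟨x, rfl⟩ ⟨y, hq⟩
      refine ⟨z, ?_⟩
      rw [← map_zpow, hΨapp]
      show (((F (Quotient.mk π x)) ^ z) ⟨x, rfl⟩ : fib _).val = y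
      rw [hz]
  -- sum transfer
  rw [Finset.sum_nbij' (i := i) (j := Ψ)
    (t := B) (g := fun F => ∏ q, ((Equiv.Perm.sign (F q) : ℤ) : ℝ))
    (hi := ?_) (hj := ?_) (left_neg := ?_) (right_neg := ?_) (h := ?_)]
  · -- compute the pi-sum as a product
    rw [hB, ← Finset.prod_univ_sum
      (t := fun q => Finset.univ.filter
        (fun c : Equiv.Perm (fib q) => ∀ u v : fib q, c.SameCycle u v))
      (f := fun q c => ((Equiv.Perm.sign c : ℤ) : ℝ))]
    -- apply the full-cycle lemma on each fiber
    have hfib_card : ∀ q : Q, 0 < Fintype.card (fib q) := by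
      intro q
      refine Fintype.card_pos_iff.2 ⟨⟨q.out, Quotient.out_eq q⟩⟩
    have hL1 : ∀ q : Q,
        ∑ c ∈ Finset.univ.filter (fun c : Equiv.Perm (fib q) => ∀ u v : fib q, c.SameCycle u v),
          ((Equiv.Perm.sign c : ℤ) : ℝ)
        = (-1 : ℝ) ^ (Fintype.card (fib q) - 1) *
            (Nat.factorial (Fintype.card (fib q) - 1) : ℝ) := by
      intro q
      exact sum_sign_fullcycle (Fintype.card (fib q) - 1) (fib q) ⟨q.out, Quotient.out_eq q⟩
        (by have := hfib_card q; omega)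
    rw [Finset.prod_congr rfl (fun q _ => hL1 q), Finset.prod_mul_distrib,
      Finset.prod_pow_eq_pow_sum]
    -- cardinality bookkeeping
    have hsumcard : ∑ q : Q, Fintype.card (fib q) = Fintype.card α := by
      rw [← Fintype.card_sigma]
      exact Fintype.card_congr e
    have hcardQ : Nat.card Q = Fintype.card Q := Nat.card_eq_fintype_card
    have hsum1 : ∑ q : Q, (Fintype.card (fib q) - 1) = Fintype.card α - Nat.card Q := by
      have h1 : ∑ q : Q, ((Fintype.card (fib q) - 1) + 1) = ∑ q : Q, Fintype.card (fib q) :=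
        Finset.sum_congr rfl (fun q _ => by have := hfib_card q; omega)
      rw [Finset.sum_add_distrib, Finset.sum_const, Finset.card_univ, smul_eq_mul, mul_one] at h1
      rw [hcardQ]
      omega
    rw [hsum1]
    congr 1
    -- the finprod over classes
    have hclasses : π.classes = Set.range (fun q : Q => {x : α | Quotient.mk π x = q}) := by
      ext s
      constructor
      · rintro ⟨y, rfl⟩
        refine ⟨Quotient.mk π y, ?_⟩
        ext z
        simp only [Set.mem_setOf_eq]
        exact ⟨fun h => hrel_of_mk h, fun h => hmk_of_rel h⟩
      · rintro ⟨q, rfl⟩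
        refine ⟨q.out, ?_⟩
        ext z
        simp only [Set.mem_setOf_eq]
        exact ⟨fun h => hrel_of_mk (h.trans (Quotient.out_eq q).symm),
          fun h => (hmk_of_rel h).trans (Quotient.out_eq q)⟩
      
    have ginj : Function.Injective (fun q : Q => {x : α | Quotient.mk π x = q}) := by
      intro q q' h
      have h2 : q.out ∈ (fun q : Q => {x : α | Quotient.mk π x = q}) q := Quotient.out_eq q
      rw [h] at h2
      exact (Quotient.out_eq q).symm.trans (h2 : Quotient.mk π q.out = q')
    rw [hclasses]
    rw [finprod_mem_range (f := fun C : Set α => ((Nat.factorial (Set.ncard C - 1) : ℝ))) ginj]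
    rw [finprod_eq_prod_of_fintype]
    refine Finset.prod_congr rfl (fun q _ => ?_)
    beta_reduce
    have hnc : ({x : α | Quotient.mk π x = q}).ncard = Fintype.card (fib q) := by
      rw [← Nat.card_coe_set_eq, Nat.card_eq_fintype_card]
      exact Fintype.card_congr (Equiv.subtypeEquivRight (fun x => Iff.rfl))
    rw [hnc]
  · -- hi : maps into B
    intro w hw
    simp only [Finset.mem_filter, Finset.mem_univ, true_and] at hw
    have hfix := hrel_apply w hw
    rw [hB, Fintype.mem_piFinset]
    intro q
    simp only [Finset.mem_filter, Finset.mem_univ, true_and]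
    intro u v
    have hrel : π.r u.val v.val := hrel_of_mk (u.prop.trans v.prop.symm)
    obtain ⟨z, hz⟩ := ((hset w).1 hw u.val v.val).2 hrel
    refine ⟨z, ?_⟩
    rw [hi_eq w hfix q, Equiv.Perm.subtypePerm_zpow]
    exact Subtype.ext hz
  · -- hj : Ψ maps B into the fiber
    intro F hF
    rw [hB, Fintype.mem_piFinset] at hF
    simp only [Finset.mem_filter, Finset.mem_univ, true_and] at hF ⊢
    exact hj' F (fun q u v => hF q u v)
  · -- left inverse
    intro w hw
    simp only [Finset.mem_filter, Finset.mem_univ, true_and] at hw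
    have hfix := hrel_apply w hw
    ext x
    rw [hΨapp, hi_eq w hfix]
    rfl
  · -- right inverse
    intro F hF
    rw [hB, Fintype.mem_piFinset] at hF
    simp only [Finset.mem_filter, Finset.mem_univ, true_and] at hF
    have hsetoid : Equiv.Perm.SameCycle.setoid (Ψ F) = π := hj' F (fun q u v => hF q u v)
    have hfix := hrel_apply (Ψ F) hsetoid
    funext q
    rw [hi_eq (Ψ F) hfix q]
    apply Equiv.ext
    intro u
    obtain ⟨x, hx⟩ := u
    subst hx
    exact Subtype.ext rfl
  · -- values agree
    intro w hw
    simp only [Finset.mem_filter, Finset.mem_univ, true_and] at hw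
    have hfix := hrel_apply w hw
    have hw_eq : Ψ (i w) = w := by
      ext x
      rw [hΨapp, hi_eq w hfix]
      rfl
    have hsign : Equiv.Perm.sign w = ∏ q, Equiv.Perm.sign (i w q) := by
      conv_lhs => rw [← hw_eq]
      have h1 : Equiv.Perm.sign (Ψ (i w))
          = Equiv.Perm.sign (Equiv.Perm.sigmaCongrRightHom fib (i w)) := by
        exact Equiv.Perm.sign_permCongr e _
      rw [h1, sign_sigmaCongrRightHom]
    rw [hsign]
    push_cast
    rfl


private lemma sum_sign_stabilizer {α γ : Type*} [Fintype α] [DecidableEq α] [DecidableEq γ] (f : α → γ) :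
    ∑ w ∈ Finset.univ.filter (fun w : Equiv.Perm α => ∀ x, f (w x) = f x),
        ((Equiv.Perm.sign w : ℤ) : ℝ)
      = if Function.Injective f then 1 else 0 := by
  classical
  by_cases hinj : Function.Injective f
  · rw [if_pos hinj]
    have hfilter : Finset.univ.filter (fun w : Equiv.Perm α => ∀ x, f (w x) = f x) = {1} := by
      ext w
      simp only [Finset.mem_filter, Finset.mem_univ, true_and, Finset.mem_singleton]
      constructor
      · intro hw
        apply Equiv.ext
        intro x
        exact hinj (hw x)
      · rintro rfl
        intro x
        simp
    rw [hfilter]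
    simp
  · rw [if_neg hinj]
    obtain ⟨a, b, hfab, hab⟩ := Function.not_injective_iff.mp hinj
    have hswapf : ∀ y, f (Equiv.swap a b y) = f y := by
      intro y
      by_cases ha : y = a
      · subst ha; rw [Equiv.swap_apply_left]; exact hfab.symm
      by_cases hb : y = b
      · subst hb; rw [Equiv.swap_apply_right]; exact hfab
      · rw [Equiv.swap_apply_of_ne_of_ne ha hb]
    refine Finset.sum_involution (fun w _ => Equiv.swap a b * w) ?_ ?_ ?_ ?_
    · intro w hw
      have hs : Equiv.Perm.sign (Equiv.swap a b * w) = - Equiv.Perm.sign w := by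
        rw [map_mul, Equiv.Perm.sign_swap hab]
        simp
      rw [hs]
      push_cast
      ring
    · intro w hw _
      intro hEq
      have h1 : Equiv.swap a b = 1 := by
        have := congrArg (fun u => u * w⁻¹) hEq
        simpa [mul_assoc] using this
      have : a = b := by
        have h2 := congrArg (fun u => u a) h1
        simpa [Equiv.swap_apply_left] using h2.symm
      exact hab this
    · intro w hw
      simp only [Finset.mem_filter, Finset.mem_univ, true_and] at hw ⊢
      intro y
      rw [Equiv.Perm.mul_apply, hswapf, hw]
    · intro w hw
      show Equiv.swap a b * (Equiv.swap a b * w) = w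
      rw [← mul_assoc, Equiv.swap_mul_self, one_mul]

end UstatAux

set_option maxHeartbeats 2000000 in
/-- the U-statistic (sum over injective index tuples) equals the linear
combination `Σ_π μ_π · V[π](h,x)` over all partitions `π` of `[m]`. -/
theorem stmt2 {X : Type*} [Nonempty X] (m n : ℕ) (hm : 0 < m) (hmn : m ≤ n)
    (h : (Fin m → X) → ℝ) (x : Fin n → X) :
    ∑ s ∈ Finset.univ.filter (fun s : Fin m → Fin n => Function.Injective s), h (x ∘ s)
      = ∑ᶠ π : Setoid (Fin m), muCoeff m π * Vstat m n h x π := by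
  classical
  haveI : Fintype (Setoid (Fin m)) :=
    Fintype.ofInjective (fun π : Setoid (Fin m) => π.r)
      (fun a b hab => Setoid.ext (fun u v => iff_of_eq (congrFun (congrFun hab u) v)))
  rw [finsum_eq_sum_of_fintype]
  have hV : ∀ π : Setoid (Fin m), muCoeff m π * Vstat m n h x π
      = ∑ s ∈ Finset.univ, (if (∀ i j, π.r i j → s i = s j)
          then muCoeff m π * h (x ∘ s) else 0) := by
    intro π
    simp only [Vstat, Finset.mul_sum, Finset.sum_filter, mul_ite, mul_zero]
  rw [Finset.sum_congr rfl (fun π _ => hV π), Finset.sum_comm]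
  -- pointwise identity in `s`
  have hN : ∀ s : Fin m → Fin n,
      ∑ π : Setoid (Fin m), (if (∀ i j, π.r i j → s i = s j)
          then muCoeff m π * h (x ∘ s) else 0)
        = (if Function.Injective s then (1:ℝ) else 0) * h (x ∘ s) := by
    intro s
    have h1 : ∑ π : Setoid (Fin m), (if (∀ i j, π.r i j → s i = s j)
          then muCoeff m π * h (x ∘ s) else 0)
        = (∑ π ∈ Finset.univ.filter (fun π : Setoid (Fin m) => ∀ i j, π.r i j → s i = s j),
            muCoeff m π) * h (x ∘ s) := by
      rw [Finset.sum_filter, Finset.sum_mul]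
      exact Finset.sum_congr rfl (fun π _ => by split <;> simp)
    rw [h1]
    congr 1
    -- express each `muCoeff` as a signed sum over permutations
    have hμ : ∀ π : Setoid (Fin m), muCoeff m π
        = ∑ w ∈ Finset.univ.filter
            (fun w : Equiv.Perm (Fin m) => Equiv.Perm.SameCycle.setoid w = π),
            ((Equiv.Perm.sign w : ℤ) : ℝ) := by
      intro π
      rw [claimA π, muCoeff, Fintype.card_fin]
    rw [Finset.sum_congr rfl (fun π _ => hμ π)]
    have hexch : ∑ π ∈ Finset.univ.filter
          (fun π : Setoid (Fin m) => ∀ i j, π.r i j → s i = s j),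
          ∑ w ∈ Finset.univ.filter
            (fun w : Equiv.Perm (Fin m) => Equiv.Perm.SameCycle.setoid w = π),
            ((Equiv.Perm.sign w : ℤ) : ℝ)
        = ∑ w ∈ Finset.univ.filter (fun w : Equiv.Perm (Fin m) =>
            Equiv.Perm.SameCycle.setoid w ∈ Finset.univ.filter
              (fun π : Setoid (Fin m) => ∀ i j, π.r i j → s i = s j)),
            ((Equiv.Perm.sign w : ℤ) : ℝ) := by
      rw [Finset.sum_congr rfl
        (fun π _ => Finset.sum_filter (fun w : Equiv.Perm (Fin m) =>
          Equiv.Perm.SameCycle.setoid w = π) (fun w => ((Equiv.Perm.sign w : ℤ) : ℝ)))]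
      rw [Finset.sum_comm, Finset.sum_filter]
      refine Finset.sum_congr rfl (fun w _ => ?_)
      rw [Finset.sum_ite_eq]
    rw [hexch]
    refine Eq.trans ?_ (sum_sign_stabilizer (α := Fin m) s)
    refine Finset.sum_congr ?_ (fun _ _ => rfl)
    ext w
    simp only [Finset.mem_filter, Finset.mem_univ, true_and]
    constructor
    · intro hw i
      exact (hw i (w i) ⟨1, by simp⟩).symm
    · intro hw i j hij
      obtain ⟨z, hz⟩ := hij
      have hpow : ∀ (g : Equiv.Perm (Fin m)), (∀ u, s (g u) = s u) →
          ∀ (k : ℕ) (u : Fin m), s ((g ^ k) u) = s u := by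
        intro g hg k
        induction k with
        | zero => intro u; simp
        | succ k ih =>
          intro u
          rw [pow_succ, Equiv.Perm.mul_apply, ih (g u), hg u]
      have hinv : ∀ (g : Equiv.Perm (Fin m)), (∀ u, s (g u) = s u) →
          ∀ u, s (g⁻¹ u) = s u := by
        intro g hg u
        conv_rhs => rw [← Equiv.Perm.one_apply u, ← mul_inv_cancel g, Equiv.Perm.mul_apply]
        rw [hg]
      have hzp : ∀ (u : Fin m), s ((w ^ z) u) = s u := by
        intro u
        match z with
        | Int.ofNat k => simpa using hpow w hw k u
        | Int.negSucc k =>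
          rw [zpow_negSucc]
          exact hinv _ (hpow w hw (k+1)) u
      rw [← hz, hzp]
  rw [Finset.sum_congr rfl (fun s _ => hN s), Finset.sum_filter]
  exact Finset.sum_congr rfl (fun s _ => by split <;> simp)
end

section
/- Let A = (A_1,...,A_K) be a list of index tuples with indices in [m] such that every index appears in some A_k (an Einsum notation with no output), and let σ be a permutation of [m]. Define the sequence of notations A_0^σ = A, and A_i^σ obtained from A_{i-1}^σ by deleting every tuple containing σ(i) and inserting a tuple enumerating the set of indices (other than σ(i)) that co-occurred with σ(i) in some deleted tuple, if nonempty. Let G(B) denote the decomposition graph of a notation B: its vertices are the indices appearing in B, with two indices adjacent iff they co-occur in a common tuple of B. Then for each i, G(A_i^σ) equals the graph obtained from G(A_{i-1}^σ) by eliminating the vertex σ(i) (forming a clique on its neighbors and deleting it). -/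
/-- Vertex elimination: connect all neighbors of `v` into a clique, then delete `v`
(encoded by making `v` isolated on the same vertex type). -/
def elimVert {V : Type*} (G : SimpleGraph V) (v : V) : SimpleGraph V where
  Adj x y := x ≠ v ∧ y ≠ v ∧ (G.Adj x y ∨ (G.Adj v x ∧ G.Adj v y ∧ x ≠ y))
  symm := by
    constructor
    rintro x y ⟨hx, hy, h | ⟨ha, hb, hxy⟩⟩
    · exact ⟨hy, hx, Or.inl h.symm⟩
    · exact ⟨hy, hx, Or.inr ⟨hb, ha, hxy.symm⟩⟩
  loopless := by
    constructor
    rintro x ⟨hx, hy, h | ⟨ha, hb, hxy⟩⟩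
    · exact G.ne_of_adj h rfl
    · exact hxy rfl

/-- The decomposition graph of an Einsum notation `B` (a list of index tuples): two indices
are adjacent iff they co-occur in a common tuple of `B`. -/
def decompGraph (m : ℕ) (B : List (List (Fin m))) : SimpleGraph (Fin m) where
  Adj x y := x ≠ y ∧ ∃ A ∈ B, x ∈ A ∧ y ∈ A
  symm := by
    constructor
    rintro x y ⟨hxy, A, hA, hx, hy⟩
    exact ⟨hxy.symm, A, hA, hy, hx⟩
  loopless := ⟨fun x hx => hx.1 rfl⟩

/-- One step of the Einsum elimination: delete every tuple containing `v` and, if the set of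
indices co-occurring with `v` is nonempty, insert a tuple `s` enumerating it. -/
def StepRel (m : ℕ) (B B' : List (List (Fin m))) (v : Fin m) : Prop :=
  ∃ s : List (Fin m),
    (∀ x : Fin m, x ∈ s ↔ (x ≠ v ∧ ∃ A ∈ B, v ∈ A ∧ x ∈ A)) ∧
    B' = B.filter (fun A => decide (v ∉ A)) ++ (if s = [] then [] else [s])

/-- along the Einsum notation sequence determined by a permutation `σ`,
the decomposition graph of the `(i+1)`-st notation is obtained from that of the `i`-th
notation by eliminating the vertex `σ(i)`. -/
theorem stmt16 (m : ℕ) (A0 : List (List (Fin m)))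
    (hcov : ∀ x : Fin m, ∃ A ∈ A0, x ∈ A)
    (σ : Equiv.Perm (Fin m)) (Aseq : ℕ → List (List (Fin m)))
    (h0 : Aseq 0 = A0)
    (hstep : ∀ i : Fin m, StepRel m (Aseq (i : ℕ)) (Aseq ((i : ℕ) + 1)) (σ i)) :
    ∀ i : Fin m,
      decompGraph m (Aseq ((i : ℕ) + 1)) = elimVert (decompGraph m (Aseq (i : ℕ))) (σ i) := by
  intro i
  obtain ⟨s, hs, hB'⟩ := hstep i
  set v := σ i with hv
  set B := Aseq (i : ℕ)
  have hmem : ∀ A, A ∈ Aseq ((i : ℕ) + 1) ↔ (A ∈ B ∧ v ∉ A) ∨ (s ≠ [] ∧ A = s) := by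
    intro A
    rw [hB', List.mem_append, List.mem_filter, decide_eq_true_iff]
    constructor
    · rintro (h | h)
      · exact Or.inl h
      · by_cases hse : s = []
        · simp [hse] at h
        · simp [hse] at h; exact Or.inr ⟨hse, h⟩
    · rintro (h | ⟨hse, rfl⟩)
      · exact Or.inl h
      · simp [hse]
  ext x y
  show (x ≠ y ∧ ∃ A ∈ Aseq ((i:ℕ)+1), x ∈ A ∧ y ∈ A) ↔ _
  constructor
  · rintro ⟨hxy, A, hA, hx, hy⟩
    rcases (hmem A).1 hA with ⟨hAB, hvA⟩ | ⟨hse, rfl⟩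
    · exact ⟨fun h => hvA (h ▸ hx), fun h => hvA (h ▸ hy),
        Or.inl ⟨hxy, A, hAB, hx, hy⟩⟩
    · obtain ⟨hxv, A', hA', hvA', hxA'⟩ := (hs x).1 hx
      obtain ⟨hyv, A'', hA'', hvA'', hyA''⟩ := (hs y).1 hy
      exact ⟨hxv, hyv, Or.inr ⟨⟨Ne.symm hxv, A', hA', hvA', hxA'⟩,
        ⟨Ne.symm hyv, A'', hA'', hvA'', hyA''⟩, hxy⟩⟩
  · rintro ⟨hxv, hyv, ⟨hxy, A, hA, hx, hy⟩ | ⟨⟨_, A1, hA1, hv1, hx1⟩, ⟨_, A2, hA2, hv2, hy2⟩, hxy⟩⟩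
    · by_cases hvA : v ∈ A
      · have hxs : x ∈ s := (hs x).2 ⟨hxv, A, hA, hvA, hx⟩
        have hys : y ∈ s := (hs y).2 ⟨hyv, A, hA, hvA, hy⟩
        exact ⟨hxy, s, (hmem s).2 (Or.inr ⟨List.ne_nil_of_mem hxs, rfl⟩), hxs, hys⟩
      · exact ⟨hxy, A, (hmem A).2 (Or.inl ⟨hA, hvA⟩), hx, hy⟩
    · have hxs : x ∈ s := (hs x).2 ⟨hxv, A1, hA1, hv1, hx1⟩
      have hys : y ∈ s := (hs y).2 ⟨hyv, A2, hA2, hv2, hy2⟩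
      exact ⟨hxy, s, (hmem s).2 (Or.inr ⟨List.ne_nil_of_mem hxs, rfl⟩), hxs, hys⟩
end
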